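/- Let G = (V,E) be a finite simple undirected graph with positive edge weights and unique shortest paths, let s, v, t be vertices with d_G(v,t) ≤ d_G(v,s), and let f ∈ E be an edge such that s and v are connected in G − f and f does not lie on the unique shortest path π(s,t). Then d_G(s,t) + d_{G−f}(v,t) ≤ 5 · d_{G−f}(s,v). (Case 3 in the proof of Lemma 3.1.) -/

import Mathlib

open scoped ENNReal

variable {V : Type*}

/-- The total weight of a walk: the sum of the weights of its edges (in `ℝ≥0∞`). -/
noncomputable def walkWeight {G : SimpleGraph V} (wt : Sym2 V → NNReal)
    {u v : V} (p : G.Walk u v) : ℝ≥0∞ :=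
  (p.edges.map (fun e => (wt e : ℝ≥0∞))).sum

/-- The weighted shortest-path distance: the infimum over all walks from `u` to `v`
of their total weight (in `ℝ≥0∞`, so it is `∞` if `u` and `v` are not connected). -/
noncomputable def wdist (G : SimpleGraph V) (wt : Sym2 V → NNReal) (u v : V) : ℝ≥0∞ :=
  ⨅ p : G.Walk u v, walkWeight wt p

/-- `G` has unique shortest paths: for every pair of connected vertices there is exactly
one walk of minimum total weight. -/
def HasUniqueShortestPaths (G : SimpleGraph V) (wt : Sym2 V → NNReal) : Prop :=
  ∀ u v : V, G.Reachable u v →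
    ∃! p : G.Walk u v, walkWeight wt p = wdist G wt u v

/-!
Only the triangle inequality is needed. Since `d(v,t) ≤ d(v,s)`, we get
`d(s,t) ≤ d(s,v) + d(v,t) ≤ 2 d(s,v) ≤ 2 d_{G-f}(s,v)`; and since `π(s,t)` avoids `f`,
`d_{G-f}(v,t) ≤ d_{G-f}(v,s) + d(s,t) ≤ 3 d_{G-f}(s,v)`.
-/

open SimpleGraph

section WeightedDistance

variable {G H : SimpleGraph V} (wt : Sym2 V → NNReal)

lemma walkWeight_append {u v w : V} (p : G.Walk u v) (q : G.Walk v w) :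
    walkWeight wt (p.append q) = walkWeight wt p + walkWeight wt q := by
  simp [walkWeight, Walk.edges_append]

lemma walkWeight_reverse {u v : V} (p : G.Walk u v) :
    walkWeight wt p.reverse = walkWeight wt p := by
  simp [walkWeight, Walk.edges_reverse, List.map_reverse, List.sum_reverse]

lemma walkWeight_transfer {u v : V} (p : G.Walk u v) (hp : ∀ e ∈ p.edges, e ∈ H.edgeSet) :
    walkWeight wt (p.transfer H hp) = walkWeight wt p := by
  simp [walkWeight, Walk.edges_transfer]

lemma wdist_le_walkWeight {u v : V} (p : G.Walk u v) : wdist G wt u v ≤ walkWeight wt p :=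
  iInf_le _ p

lemma wdist_comm (u v : V) : wdist G wt u v = wdist G wt v u := by
  have key : ∀ a b : V, wdist G wt a b ≤ wdist G wt b a := fun a b =>
    le_iInf fun p => walkWeight_reverse wt p ▸ wdist_le_walkWeight wt p.reverse
  exact le_antisymm (key u v) (key v u)

lemma wdist_triangle (u v w : V) :
    wdist G wt u w ≤ wdist G wt u v + wdist G wt v w := by
  simp only [wdist, ENNReal.iInf_add, ENNReal.add_iInf]
  exact le_iInf₂ fun q p => walkWeight_append wt p q ▸ wdist_le_walkWeight wt (p.append q)

lemma wdist_le_wdist_of_le (hHG : H ≤ G) (u v : V) : wdist G wt u v ≤ wdist H wt u v :=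
  le_iInf fun p => by
    simpa [walkWeight, Walk.edges_mapLe_eq_edges] using wdist_le_walkWeight wt (p.mapLe hHG)

lemma wdist_deleteEdges_singleton_le {u v : V} {f : Sym2 V} (p : G.Walk u v)
    (hfp : f ∉ p.edges) : wdist (G.deleteEdges {f}) wt u v ≤ walkWeight wt p :=
  walkWeight_transfer wt p _ ▸ wdist_le_walkWeight wt (p.toDeleteEdge f hfp)

lemma wdist_le_two_mul_of_wdist_le {s v t : V} (hvt : wdist G wt v t ≤ wdist G wt v s) :
    wdist G wt s t ≤ 2 * wdist G wt s v :=
  calc wdist G wt s t ≤ wdist G wt s v + wdist G wt v t := wdist_triangle wt s v t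
    _ ≤ wdist G wt s v + wdist G wt s v := by gcongr; exact hvt.trans (wdist_comm wt v s).le
    _ = 2 * wdist G wt s v := (two_mul _).symm

end WeightedDistance

theorem stmt8_general (G : SimpleGraph V) (wt : Sym2 V → NNReal)
    (s v t : V) (hvt : wdist G wt v t ≤ wdist G wt v s)
    (f : Sym2 V)
    (qst : G.Walk s t) (hqst : walkWeight wt qst = wdist G wt s t)
    (hfq : f ∉ qst.edges) :
    wdist G wt s t + wdist (G.deleteEdges {f}) wt v t ≤
      5 * wdist (G.deleteEdges {f}) wt s v := by
  set G' := G.deleteEdges {f}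
  have hst : wdist G wt s t ≤ 2 * wdist G' wt s v :=
    (wdist_le_two_mul_of_wdist_le wt hvt).trans <| by
      gcongr; exact wdist_le_wdist_of_le wt (G.deleteEdges_le _) s v
  have hst' : wdist G' wt s t ≤ wdist G wt s t :=
    hqst ▸ wdist_deleteEdges_singleton_le wt qst hfq
  have hvt' : wdist G' wt v t ≤ 3 * wdist G' wt s v :=
    calc wdist G' wt v t ≤ wdist G' wt v s + wdist G' wt s t := wdist_triangle wt v s t
      _ ≤ wdist G' wt s v + 2 * wdist G' wt s v := by
        rw [wdist_comm wt v s]; gcongr; exact hst'.trans hst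
      _ = 3 * wdist G' wt s v := by ring
  calc wdist G wt s t + wdist G' wt v t ≤ 2 * wdist G' wt s v + 3 * wdist G' wt s v :=
        add_le_add hst hvt'
    _ = 5 * wdist G' wt s v := by ring

theorem stmt8 [Fintype V] [DecidableEq V] (G : SimpleGraph V) (wt : Sym2 V → NNReal)
    (hwt : ∀ e ∈ G.edgeSet, 0 < wt e)
    (huniq : HasUniqueShortestPaths G wt)
    (s v t : V) (hvt : wdist G wt v t ≤ wdist G wt v s)
    (f : Sym2 V) (hf : f ∈ G.edgeSet)
    (hconn : (G.deleteEdges {f}).Reachable s v)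
    (qst : G.Walk s t) (hqst : walkWeight wt qst = wdist G wt s t)
    (hfq : f ∉ qst.edges) :
    wdist G wt s t + wdist (G.deleteEdges {f}) wt v t ≤
      5 * wdist (G.deleteEdges {f}) wt s v :=
  stmt8_general G wt s v t hvt f qst hqst hfq
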